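/- For every integer N ≥ 3, ∫_{ℝ^N} U(x)^{2N/(N−2)} dx = π^{(N+1)/2}·2^{1−N}·[N(N−2)]^{N/2} / Γ((N+1)/2). -/

import Mathlib

/-!
With `c = N(N-2)`, the integrand is `(c / (c + ‖x‖²))^N`. In polar coordinates, followed by the
substitutions `u = r²` and `u = c t / (1 - t)`, the integral of `(c / (c + ‖x‖²))^a` over an
`n`-dimensional space becomes a Beta integral, giving `π^(n/2) c^(n/2) Γ(a - n/2) / Γ(a)`.
For `a = n = N` Legendre's duplication formula turns `Γ(N/2) / Γ(N)` into
`2^(1-N) √π / Γ((N+1)/2)`.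
-/

open Real MeasureTheory

/-- The Talenti instanton `U(x) = (N(N−2)/(N(N−2)+|x|²))^((N−2)/2)` on `ℝ^N`. -/
noncomputable def talenti (N : ℕ) (x : EuclideanSpace ℝ (Fin N)) : ℝ :=
  ((N : ℝ) * ((N : ℝ) - 2) / ((N : ℝ) * ((N : ℝ) - 2) + ‖x‖ ^ 2)) ^ (((N : ℝ) - 2) / 2)

open Set Module

theorem integral_Ioo_rpow_mul_one_sub_rpow {s t : ℝ} (hs : 0 < s) (ht : 0 < t) :
    ∫ x in Ioo (0 : ℝ) 1, x ^ (s - 1) * (1 - x) ^ (t - 1) = Gamma s * Gamma t / Gamma (s + t) := by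
  have hB : Complex.betaIntegral s t
      = ((∫ x in (0 : ℝ)..1, x ^ (s - 1) * (1 - x) ^ (t - 1) : ℝ) : ℂ) := by
    rw [← intervalIntegral.integral_ofReal]
    refine intervalIntegral.integral_congr fun x hx => ?_
    rw [uIcc_of_le zero_le_one] at hx
    push_cast
    rw [Complex.ofReal_cpow hx.1, Complex.ofReal_cpow (sub_nonneg.mpr hx.2)]
    push_cast
    ring
  have h := Complex.betaIntegral_eq_Gamma_mul_div s t (by simpa using hs) (by simpa using ht)
  rw [hB, ← Complex.ofReal_add, Complex.Gamma_ofReal, Complex.Gamma_ofReal,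
    Complex.Gamma_ofReal] at h
  rw [← integral_Ioc_eq_integral_Ioo, ← intervalIntegral.integral_of_le zero_le_one]
  exact_mod_cast h

theorem Gamma_div_Gamma_two_mul {s : ℝ} (hs : 0 < s) :
    Gamma s / Gamma (2 * s) = 2 ^ (1 - 2 * s) * √π / Gamma (s + 1 / 2) := by
  have h2s : Gamma (2 * s) ≠ 0 := (Gamma_pos_of_pos (by positivity)).ne'
  have hs' : Gamma (s + 1 / 2) ≠ 0 := (Gamma_pos_of_pos (by positivity)).ne'
  rw [div_eq_div_iff h2s hs', Gamma_mul_Gamma_add_half]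
  ring

theorem bijOn_mul_div_one_sub {c : ℝ} (hc : 0 < c) :
    BijOn (fun x : ℝ => c * x / (1 - x)) (Ioo 0 1) (Ioi 0) := by
  refine InvOn.bijOn (f' := fun u => u / (c + u)) ⟨fun x hx => ?_, fun u hu => ?_⟩
    (fun x hx => ?_) (fun u (hu : 0 < u) => ?_)
  · have : 1 - x ≠ 0 := by linarith [hx.2]
    field_simp
    ring
  · have : c + u ≠ 0 := by linarith [show 0 < u from hu]
    field_simp
    rw [add_sub_cancel_right, mul_div_cancel_left₀ _ hc.ne']
  · exact div_pos (mul_pos hc hx.1) (by linarith [hx.2])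
  · exact ⟨div_pos hu (by linarith), (div_lt_one (by linarith)).mpr (by linarith)⟩

theorem integral_Ioi_rpow_mul_div_add_rpow {c : ℝ} (hc : 0 < c) (s t : ℝ) :
    ∫ u in Ioi (0 : ℝ), u ^ (s - 1) * (c / (c + u)) ^ (s + t)
      = c ^ s * ∫ x in Ioo (0 : ℝ) 1, x ^ (s - 1) * (1 - x) ^ (t - 1) := by
  have hderiv : ∀ x ∈ Ioo (0 : ℝ) 1,
      HasDerivWithinAt (fun x => c * x / (1 - x)) (c / (1 - x) ^ 2) (Ioo 0 1) x := by
    intro x hx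
    have h1 : 1 - x ≠ 0 := by linarith [hx.2]
    have hd : HasDerivAt (fun x => c * x / (1 - x))
        ((c * 1 * (1 - x) - c * x * (0 - 1)) / (1 - x) ^ 2) x :=
      ((hasDerivAt_id' x).const_mul c).div ((hasDerivAt_const x 1).sub (hasDerivAt_id' x)) h1
    refine (hd.congr_deriv ?_).hasDerivWithinAt
    ring
  rw [← (bijOn_mul_div_one_sub hc).image_eq,
    integral_image_eq_integral_abs_deriv_smul measurableSet_Ioo hderiv
      (bijOn_mul_div_one_sub hc).injOn, ← integral_const_mul]
  refine setIntegral_congr_fun measurableSet_Ioo fun x ⟨hx0, hx1⟩ => ?_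
  have hx1' : 0 < 1 - x := by linarith
  have hsum : c + c * x / (1 - x) = c / (1 - x) := by field_simp; ring
  have hsplit : (1 - x) ^ (s + t) = (1 - x) ^ (s - 1) * (1 - x) ^ (t - 1) * (1 - x) ^ 2 := by
    rw [← rpow_natCast, ← rpow_add hx1', ← rpow_add hx1']
    congr 1
    push_cast
    ring
  have hc' : c ^ s = c ^ (s - 1) * c := by
    rw [← rpow_add_one hc.ne', sub_add_cancel]
  rw [smul_eq_mul, abs_of_pos (by positivity), hsum, div_div_cancel₀ hc.ne', hsplit,
    div_rpow (by positivity) hx1'.le, mul_rpow hc.le hx0.le, hc']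
  have : (1 - x) ^ (s - 1) ≠ 0 := by positivity
  field_simp

theorem integral_Ioi_pow_mul_div_add_sq_rpow {c a : ℝ} (hc : 0 < c) {n : ℕ} (hn : 0 < n)
    (ha : n / 2 < a) :
    ∫ r in Ioi (0 : ℝ), r ^ (n - 1) * (c / (c + r ^ 2)) ^ a
      = c ^ ((n : ℝ) / 2) / 2 * (Gamma (n / 2) * Gamma (a - n / 2) / Gamma a) := by
  have hsub := integral_comp_rpow_Ioi_of_pos (p := 2) two_pos
    (g := fun u => u ^ ((n : ℝ) / 2 - 1) * (c / (c + u)) ^ ((n : ℝ) / 2 + (a - n / 2)))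
  rw [integral_Ioi_rpow_mul_div_add_rpow hc, integral_Ioo_rpow_mul_one_sub_rpow (by positivity)
    (by linarith), add_sub_cancel] at hsub
  rw [div_mul_eq_mul_div, ← hsub, ← integral_div]
  refine setIntegral_congr_fun measurableSet_Ioi fun r (hr : 0 < r) => ?_
  have hpow : r ^ (n - 1) = r ^ ((2 : ℝ) - 1) * (r ^ (2 : ℝ)) ^ ((n : ℝ) / 2 - 1) := by
    rw [← rpow_mul hr.le, ← rpow_add hr, ← rpow_natCast, Nat.cast_sub hn]
    congr 1
    push_cast
    ring
  rw [smul_eq_mul, hpow, rpow_two]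
  ring

theorem integral_fun_norm_volume {E : Type*} [NormedAddCommGroup E] [InnerProductSpace ℝ E]
    [FiniteDimensional ℝ E] [MeasurableSpace E] [BorelSpace E] [Nontrivial E] (f : ℝ → ℝ) :
    ∫ x : E, f ‖x‖ = 2 * π ^ ((finrank ℝ E : ℝ) / 2) / Gamma (finrank ℝ E / 2)
      * ∫ r in Ioi (0 : ℝ), r ^ (finrank ℝ E - 1) * f r := by
  have hn : (0 : ℝ) < finrank ℝ E := Nat.cast_pos.mpr finrank_pos
  have hvol : volume.real (Metric.ball (0 : E) 1)
      = π ^ ((finrank ℝ E : ℝ) / 2) / (finrank ℝ E / 2 * Gamma (finrank ℝ E / 2)) := by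
    rw [measureReal_def, InnerProductSpace.volume_ball, ENNReal.ofReal_one, one_pow, one_mul,
      ENNReal.toReal_ofReal (by positivity), Gamma_add_one (by positivity), sqrt_eq_rpow,
      ← rpow_natCast, ← rpow_mul pi_nonneg]
    ring_nf
  have hG : Gamma (finrank ℝ E / 2) ≠ 0 := (Gamma_pos_of_pos (by positivity)).ne'
  rw [integral_fun_norm_addHaar, hvol]
  simp only [nsmul_eq_mul, smul_eq_mul]
  field_simp

theorem integral_div_add_norm_sq_rpow {E : Type*} [NormedAddCommGroup E] [InnerProductSpace ℝ E]
    [FiniteDimensional ℝ E] [MeasurableSpace E] [BorelSpace E] [Nontrivial E] {c a : ℝ}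
    (hc : 0 < c) (ha : finrank ℝ E / 2 < a) :
    ∫ x : E, (c / (c + ‖x‖ ^ 2)) ^ a
      = π ^ ((finrank ℝ E : ℝ) / 2) * c ^ ((finrank ℝ E : ℝ) / 2)
          * Gamma (a - finrank ℝ E / 2) / Gamma a := by
  have hn : (0 : ℝ) < finrank ℝ E := Nat.cast_pos.mpr finrank_pos
  have hG : Gamma (finrank ℝ E / 2) ≠ 0 := (Gamma_pos_of_pos (by positivity)).ne'
  rw [integral_fun_norm_volume (fun r => (c / (c + r ^ 2)) ^ a),
    integral_Ioi_pow_mul_div_add_sq_rpow hc finrank_pos ha]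
  field_simp

theorem talenti_rpow_critical_exponent {N : ℕ} (hN : 2 < N) (x : EuclideanSpace ℝ (Fin N)) :
    talenti N x ^ (2 * (N : ℝ) / ((N : ℝ) - 2))
      = ((N : ℝ) * ((N : ℝ) - 2) / ((N : ℝ) * ((N : ℝ) - 2) + ‖x‖ ^ 2)) ^ (N : ℝ) := by
  have hN' : (2 : ℝ) < N := by exact_mod_cast hN
  have hc : 0 < (N : ℝ) * ((N : ℝ) - 2) := by nlinarith
  rw [talenti, ← rpow_mul (by positivity)]
  congr 1
  field_simp [(sub_pos.mpr hN').ne']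

theorem stmt_7 (N : ℕ) (hN : 3 ≤ N) :
    ∫ x : EuclideanSpace ℝ (Fin N), talenti N x ^ (2 * (N : ℝ) / ((N : ℝ) - 2))
      = Real.pi ^ (((N : ℝ) + 1) / 2) * 2 ^ (1 - (N : ℝ))
          * ((N : ℝ) * ((N : ℝ) - 2)) ^ ((N : ℝ) / 2) / Real.Gamma (((N : ℝ) + 1) / 2) := by
  have hN' : (2 : ℝ) < N := by exact_mod_cast hN
  have : NeZero N := ⟨by omega⟩
  simp_rw [talenti_rpow_critical_exponent hN]
  rw [integral_div_add_norm_sq_rpow (by nlinarith) (by rw [finrank_euclideanSpace_fin]; linarith),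
    finrank_euclideanSpace_fin]
  have hdup := Gamma_div_Gamma_two_mul (s := (N : ℝ) / 2) (by positivity)
  rw [mul_div_cancel₀ _ two_ne_zero] at hdup
  rw [show (N : ℝ) - N / 2 = N / 2 by ring, mul_div_assoc, hdup,
    show ((N : ℝ) + 1) / 2 = N / 2 + 1 / 2 by ring, rpow_add pi_pos, sqrt_eq_rpow]
  ring
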